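/- Let g ≥ 1 and define, for 1 ≤ k ≤ g−1, the elements α_k = Σ_{a=1}^{k} Σ_{b=k+1}^{g} v_{a+b−k−1} ∧ w_a ∧ w_b and β_k = Σ_{a=1}^{k} Σ_{b=k+1}^{g} v_{a+b−k} ∧ w_a ∧ w_b in ⋀^3 V (with the convention v_s = 0 if s ∉ {1,…,g}). Then C_a(α_k) = 0 and C_a(β_k) = 0 for every scalar a, where C_a is the derivation on ⋀^3 V determined by C_a(v) = L_a(v) K_a. -/
import Mathlib


noncomputable section

/-- The `2g`-dimensional vector space `V` with basis `v₁,…,v_g, w₁,…,w_g`. -/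
abbrev Vg (K : Type*) (g : ℕ) := (Fin g ⊕ Fin g) → K

variable {K : Type*} [Field K]

def vv (g : ℕ) (i : Fin g) : Vg K g := Pi.single (Sum.inl i) 1

def ww (g : ℕ) (i : Fin g) : Vg K g := Pi.single (Sum.inr i) 1

/-- `v_s` for a 1-based natural index, with the convention `v_s = 0` if `s ∉ {1,…,g}`. -/
def vext (g : ℕ) (s : ℕ) : Vg K g :=
  if h : 1 ≤ s ∧ s ≤ g then vv g ⟨s - 1, by omega⟩ else 0

/-- `w_s` for a 1-based natural index, with the convention `w_s = 0` if `s ∉ {1,…,g}`. -/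
def wext (g : ℕ) (s : ℕ) : Vg K g :=
  if h : 1 ≤ s ∧ s ≤ g then ww g ⟨s - 1, by omega⟩ else 0

def Kvec (g : ℕ) (a : K) : Vg K g := Sum.elim (fun _ => 0) (fun k => a ^ (k : ℕ))

def Lfun (g : ℕ) (a : K) : Vg K g →ₗ[K] K :=
  ∑ k : Fin g, a ^ (k : ℕ) • (LinearMap.proj (Sum.inl k) : Vg K g →ₗ[K] K)

/-- `C_a(v) = L_a(v)·K_a` -/
def Cmap (g : ℕ) (a : K) : Vg K g →ₗ[K] Vg K g := (Lfun g a).smulRight (Kvec g a)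

/-- `α_k = Σ_{a=1}^{k} Σ_{b=k+1}^{g} v_{a+b−k−1} ∧ w_a ∧ w_b` -/
def alphaE (g k : ℕ) : ExteriorAlgebra K (Vg K g) :=
  ∑ a ∈ Finset.Icc 1 k, ∑ b ∈ Finset.Icc (k + 1) g,
    ExteriorAlgebra.ι K (vext g (a + b - k - 1)) * ExteriorAlgebra.ι K (wext g a)
      * ExteriorAlgebra.ι K (wext g b)

/-- `β_k = Σ_{a=1}^{k} Σ_{b=k+1}^{g} v_{a+b−k} ∧ w_a ∧ w_b` -/
def betaE (g k : ℕ) : ExteriorAlgebra K (Vg K g) :=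
  ∑ a ∈ Finset.Icc 1 k, ∑ b ∈ Finset.Icc (k + 1) g,
    ExteriorAlgebra.ι K (vext g (a + b - k)) * ExteriorAlgebra.ι K (wext g a)
      * ExteriorAlgebra.ι K (wext g b)

lemma Lfun_w (g : ℕ) (a : K) (j : ℕ) : Lfun g a (wext g j) = 0 := by
  unfold Lfun wext ww
  split <;> simp [Pi.single_apply]

lemma Cmap_w (g : ℕ) (a : K) (j : ℕ) : Cmap g a (wext g j) = 0 := by
  simp [Cmap, Lfun_w]

lemma Lfun_v (g : ℕ) (a : K) (s : ℕ) (h1 : 1 ≤ s) (h2 : s ≤ g) :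
    Lfun g a (vext g s) = a ^ (s - 1) := by
  unfold Lfun vext vv
  rw [dif_pos ⟨h1, h2⟩]
  simp [Pi.single_apply]

lemma Kvec_eq (g : ℕ) (a : K) :
    Kvec g a = ∑ c ∈ Finset.Icc 1 g, a ^ (c - 1) • wext g c := by
  funext x
  rw [Finset.sum_apply]
  cases x with
  | inl i =>
    simp only [Kvec, Sum.elim_inl]
    rw [eq_comm, Finset.sum_eq_zero]
    intro c hc
    simp only [Finset.mem_Icc] at hc
    simp [wext, dif_pos (And.intro hc.1 hc.2), ww, Pi.single_apply]
  | inr i =>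
    simp only [Kvec, Sum.elim_inr]
    rw [eq_comm, Finset.sum_eq_single ((i : ℕ) + 1)]
    · have h : 1 ≤ (i : ℕ) + 1 ∧ (i : ℕ) + 1 ≤ g := ⟨by omega, by omega⟩
      simp [wext, dif_pos h, ww, Pi.single_apply, h.2]
    · intro c hc hne
      simp only [Finset.mem_Icc] at hc
      have : (⟨c - 1, by omega⟩ : Fin g) ≠ i := by
        intro h; apply hne
        have := congrArg Fin.val h
        simp at this; omega
      simp [wext, dif_pos (And.intro hc.1 hc.2), ww, Pi.single_apply, this]
    · intro h
      exfalso; apply h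
      simp only [Finset.mem_Icc]; omega

open ExteriorAlgebra in
lemma tri {M : Type*} [AddCommGroup M] [Module K M] (x y z : M) :
    ι K z * ι K x * ι K y + ι K y * ι K x * ι K z = 0 := by
  have hzx : ι K z * ι K x = -(ι K x * ι K z) :=
    eq_neg_of_add_eq_zero_left (ι_add_mul_swap z x)
  have hyx : ι K y * ι K x = -(ι K x * ι K y) :=
    eq_neg_of_add_eq_zero_left (ι_add_mul_swap y x)
  rw [hzx, hyx, neg_mul, neg_mul, mul_assoc, mul_assoc, ← neg_add, ← mul_add,
    ι_add_mul_swap, mul_zero, neg_zero]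

open ExteriorAlgebra in
lemma tri2 {M : Type*} [AddCommGroup M] [Module K M] (x y : M) :
    ι K y * ι K x * ι K y = 0 := by
  have hyx : ι K y * ι K x = -(ι K x * ι K y) :=
    eq_neg_of_add_eq_zero_left (ι_add_mul_swap y x)
  rw [hyx, neg_mul, mul_assoc, ι_sq_zero, mul_zero, neg_zero]

open ExteriorAlgebra Finset in
lemma cancel (g k m : ℕ) (hk1 : 1 ≤ k) (hkg : k + 1 ≤ g) (hm1 : k ≤ m) (hm2 : m ≤ k + 1)
    (aa : K) :
    ∑ p ∈ Finset.Icc 1 k ×ˢ (Finset.Icc (k+1) g ×ˢ Finset.Icc 1 g),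
      (aa ^ (p.1 + p.2.1 - m - 1) * aa ^ (p.2.2 - 1)) •
        (ι K (wext g p.2.2) * ι K (wext g p.1) * ι K (wext g p.2.1)) = (0 : ExteriorAlgebra K (Vg K g)) := by
  refine Finset.sum_involution
    (f := fun p : ℕ × ℕ × ℕ => (aa ^ (p.1 + p.2.1 - m - 1) * aa ^ (p.2.2 - 1)) •
        (ι K (wext g p.2.2) * ι K (wext g p.1) * ι K (wext g p.2.1)))
    (fun p _ => if p.2.2 ≤ k then (p.2.2, p.2.1, p.1) else (p.1, p.2.2, p.2.1))
    ?_ ?_ ?_ ?_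
  · rintro ⟨a, b, c⟩ hp
    simp only [mem_product, mem_Icc] at hp
    obtain ⟨⟨ha1, ha2⟩, ⟨hb1, hb2⟩, ⟨hc1, hc2⟩⟩ := hp
    by_cases h : c ≤ k
    · simp only [if_pos h]
      have hco : aa ^ (c + b - m - 1) * aa ^ (a - 1)
          = aa ^ (a + b - m - 1) * aa ^ (c - 1) := by
        rw [← pow_add, ← pow_add]; congr 1; omega
      rw [hco, ← smul_add, ← add_mul, ι_add_mul_swap, zero_mul, smul_zero]
    · simp only [if_neg h]
      have hco : aa ^ (a + c - m - 1) * aa ^ (b - 1)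
          = aa ^ (a + b - m - 1) * aa ^ (c - 1) := by
        rw [← pow_add, ← pow_add]; congr 1; omega
      rw [hco, ← smul_add, tri, smul_zero]
  · rintro ⟨a, b, c⟩ hp hf heq
    exfalso; apply hf
    dsimp only at heq ⊢
    by_cases h : c ≤ k
    · rw [if_pos h] at heq
      obtain rfl : c = a := congrArg Prod.fst heq
      rw [ι_sq_zero, zero_mul, smul_zero]
    · rw [if_neg h] at heq
      obtain rfl : c = b := congrArg (fun q : ℕ × ℕ × ℕ => q.2.1) heq
      rw [tri2, smul_zero]
  · rintro ⟨a, b, c⟩ hp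
    simp only [mem_product, mem_Icc] at hp ⊢
    by_cases h : c ≤ k
    · simp only [if_pos h]; omega
    · simp only [if_neg h]; omega
  · rintro ⟨a, b, c⟩ hp
    simp only [mem_product, mem_Icc] at hp
    obtain ⟨⟨ha1, ha2⟩, ⟨hb1, hb2⟩, ⟨hc1, hc2⟩⟩ := hp
    dsimp only
    by_cases h : c ≤ k
    · rw [if_pos h]; dsimp only; rw [if_pos ha2]
    · rw [if_neg h]; dsimp only; rw [if_neg (by omega : ¬ b ≤ k)]

open ExteriorAlgebra Finset in
lemma key (g k m : ℕ) (hk1 : 1 ≤ k) (hkg : k + 1 ≤ g) (hm1 : k ≤ m) (hm2 : m ≤ k + 1)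
    (aa : K)
    (D : ExteriorAlgebra K (Vg K g) →ₗ[K] ExteriorAlgebra K (Vg K g))
    (hD : ∀ x y z : Vg K g,
      D (ι K x * ι K y * ι K z)
        = ι K (Cmap g aa x) * ι K y * ι K z
          + ι K x * ι K (Cmap g aa y) * ι K z
          + ι K x * ι K y * ι K (Cmap g aa z)) :
    D (∑ a ∈ Finset.Icc 1 k, ∑ b ∈ Finset.Icc (k + 1) g,
        ι K (vext g (a + b - m)) * ι K (wext g a) * ι K (wext g b)) = 0 := by
  have h0 := cancel g k m hk1 hkg hm1 hm2 aa
  simp only [Finset.sum_product] at h0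
  rw [map_sum, ← h0]
  refine Finset.sum_congr rfl fun a ha => ?_
  rw [map_sum]
  refine Finset.sum_congr rfl fun b hb => ?_
  simp only [mem_Icc] at ha hb
  rw [hD]
  have hs1 : 1 ≤ a + b - m := by omega
  have hs2 : a + b - m ≤ g := by omega
  have hC : Cmap g aa (vext g (a + b - m)) = aa ^ (a + b - m - 1) • Kvec g aa := by
    rw [Cmap, LinearMap.smulRight_apply, Lfun_v g aa _ hs1 hs2]
  simp only [Cmap_w, map_zero, mul_zero, zero_mul, add_zero, hC]
  rw [map_smul, Kvec_eq, map_sum]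
  simp only [map_smul, smul_mul_assoc, Finset.sum_mul, Finset.smul_sum, smul_smul]

/-- for `1 ≤ k ≤ g−1` and any scalar `a`, the derivation extension of
`C_a` to `⋀³ V` kills `α_k` and `β_k`. -/
theorem alpha_beta_in_ker (g : ℕ) (hg : 1 ≤ g) (k : ℕ) (hk : k ∈ Finset.Icc 1 (g - 1))
    (aa : K)
    (D : ExteriorAlgebra K (Vg K g) →ₗ[K] ExteriorAlgebra K (Vg K g))
    (hD : ∀ x y z : Vg K g,
      D (ExteriorAlgebra.ι K x * ExteriorAlgebra.ι K y * ExteriorAlgebra.ι K z)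
        = ExteriorAlgebra.ι K (Cmap g aa x) * ExteriorAlgebra.ι K y
            * ExteriorAlgebra.ι K z
          + ExteriorAlgebra.ι K x * ExteriorAlgebra.ι K (Cmap g aa y)
            * ExteriorAlgebra.ι K z
          + ExteriorAlgebra.ι K x * ExteriorAlgebra.ι K y
            * ExteriorAlgebra.ι K (Cmap g aa z)) :
    D (alphaE g k) = 0 ∧ D (betaE g k) = 0 := by
  simp only [alphaE, betaE]
  simp only [Finset.mem_Icc] at hk
  constructor
  · have h := key g k (k + 1) hk.1 (by omega) (by omega) (by omega) aa D hD
    simp only [Nat.sub_sub] at h ⊢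
    exact h
  · exact key g k k hk.1 (by omega) (by omega) (by omega) aa D hD
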